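/- arXiv:math/0512188 — 9 statements merged into one kernel-verified Lean document; each statement's English description precedes it below -/
import Mathlib

section
/- In st_n(R) (n ≥ 3), for distinct i, j and a, b, c ∈ R one has [T_{ij}(a,b), X_{ij}(c)] = X_{ij}(abc + cba). -/
/-- The defining relations of the Steinberg Lie algebra `st_n(R)`, for a family of
`K`-linear maps `X i j : R → L` (playing the role of `a ↦ X_{ij}(a)`). -/
structure SteinbergRel (K R : Type) [CommRing K] [Ring R] [Algebra K R]
    (n : ℕ) (L : Type) [LieRing L] [LieAlgebra K L]
    (X : Fin n → Fin n → R →ₗ[K] L) : Prop where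
  bracket_mul : ∀ ⦃i j k : Fin n⦄, i ≠ j → j ≠ k → i ≠ k → ∀ a b : R,
    ⁅X i j a, X j k b⁆ = X i k (a * b)
  bracket_zero : ∀ ⦃i j k l : Fin n⦄, i ≠ j → k ≠ l → j ≠ k → i ≠ l → ∀ a b : R,
    ⁅X i j a, X k l b⁆ = 0


/-- In `st_n(R)` (`n ≥ 3`), for distinct `i, j` and `a, b, c ∈ R`:
`⁅T_{ij}(a,b), X_{ij}(c)⁆ = X_{ij}(abc + cba)`, where `T_{ij}(a,b) = ⁅X_{ij}(a), X_{ji}(b)⁆`. -/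
theorem steinberg_T_bracket_same (K R L : Type) [CommRing K] [Ring R] [Algebra K R]
    [LieRing L] [LieAlgebra K L] (n : ℕ) (hn : 3 ≤ n)
    (X : Fin n → Fin n → R →ₗ[K] L) (h : SteinbergRel K R n L X)
    (i j : Fin n) (hij : i ≠ j) (a b c : R) :
    ⁅⁅X i j a, X j i b⁆, X i j c⁆ = X i j (a * b * c + c * (b * a)) := by
  -- find k distinct from i and j
  obtain ⟨k, hk⟩ : ∃ k : Fin n, k ∉ ({i, j} : Finset (Fin n)) := by
    have hcard : (({i, j} : Finset (Fin n)))ᶜ.Nonempty := by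
      rw [← Finset.card_pos, Finset.card_compl]
      have : ({i, j} : Finset (Fin n)).card ≤ 2 := Finset.card_insert_le _ _
      simp only [Fintype.card_fin]
      omega
    obtain ⟨k, hk⟩ := hcard
    exact ⟨k, Finset.mem_compl.mp hk⟩
  simp only [Finset.mem_insert, Finset.mem_singleton, not_or] at hk
  obtain ⟨hki, hkj⟩ := hk
  have hji := hij.symm
  have hik : i ≠ k := fun e => hki e.symm
  have hjk : j ≠ k := fun e => hkj e.symm
  -- decompose X i j c
  have hc : X i j c = ⁅X i k c, X k j (1 : R)⁆ := by
    rw [h.bracket_mul hik hkj hij, mul_one]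
  -- ⁅T, X i k c⁆ = X i k (a * (b * c))
  have h1 : ⁅⁅X i j a, X j i b⁆, X i k c⁆ = X i k (a * (b * c)) := by
    rw [lie_lie, h.bracket_mul hji hik hjk, h.bracket_mul hij hjk hik,
      h.bracket_zero hij hik hji hik, lie_zero, sub_zero]
  -- ⁅T, X k j 1⁆ = X k j (b * a)
  have h2 : ⁅⁅X i j a, X j i b⁆, X k j (1 : R)⁆ = X k j (b * a) := by
    rw [lie_lie, h.bracket_zero hij hkj hjk hij, lie_zero, sub_zero]
    have hb : ⁅X j i b, X k j (1 : R)⁆ = -X k i b := by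
      rw [← lie_skew, h.bracket_mul hkj hji hki, one_mul]
    rw [hb, lie_neg, ← lie_skew, neg_neg, h.bracket_mul hki hij hkj]
  calc ⁅⁅X i j a, X j i b⁆, X i j c⁆
      = ⁅⁅X i j a, X j i b⁆, ⁅X i k c, X k j (1 : R)⁆⁆ := by rw [hc]
    _ = ⁅⁅⁅X i j a, X j i b⁆, X i k c⁆, X k j (1 : R)⁆
        + ⁅X i k c, ⁅⁅X i j a, X j i b⁆, X k j (1 : R)⁆⁆ := by
        exact leibniz_lie _ _ _
    _ = X i j (a * b * c + c * (b * a)) := by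
        rw [h1, h2, h.bracket_mul hik hkj hij, h.bracket_mul hik hkj hij, ← map_add,
          mul_one, mul_assoc]
end

section
/- In st_n(R) (n ≥ 3), the identity T_{ij}(ab, c) = T_{ik}(a, bc) + T_{kj}(b, ca) holds for distinct i, j, k and a, b, c ∈ R. -/
/-- In `st_n(R)` (`n ≥ 3`), the identity `T_{ij}(ab, c) = T_{ik}(a, bc) + T_{kj}(b, ca)` holds
for distinct `i, j, k`, where `T_{ij}(a,b) = ⁅X_{ij}(a), X_{ji}(b)⁆`. -/
theorem steinberg_T_cocycle (K R L : Type) [CommRing K] [Ring R] [Algebra K R]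
    [LieRing L] [LieAlgebra K L] (n : ℕ) (hn : 3 ≤ n)
    (X : Fin n → Fin n → R →ₗ[K] L) (h : SteinbergRel K R n L X)
    (i j k : Fin n) (hij : i ≠ j) (hjk : j ≠ k) (hik : i ≠ k) (a b c : R) :
    ⁅X i j (a * b), X j i c⁆ = ⁅X i k a, X k i (b * c)⁆ + ⁅X k j b, X j k (c * a)⁆ := by
  have h1 : X i j (a * b) = ⁅X i k a, X k j b⁆ := (h.bracket_mul hik hjk.symm hij a b).symm
  rw [h1, lie_lie, h.bracket_mul hjk.symm hij.symm hik.symm b c,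
    show ⁅X i k a, X j i c⁆ = -X j k (c * a) by
      rw [← lie_skew, h.bracket_mul hij.symm hik hjk c a]]
  rw [lie_neg]
  abel
end

section
/- In st_n(R) (n ≥ 3), the element t(a,b) := T_{1j}(a,b) - T_{1j}(1, ba) does not depend on the choice of j ∈ {2,...,n}. -/
/-- Key identity: `T_{ij}(a,b) = T_{ik}(a,b) + T_{kj}(1, b*a)` for pairwise distinct
`i, j, k`. -/
lemma steinberg_T_shift (K R L : Type) [CommRing K] [Ring R] [Algebra K R]
    [LieRing L] [LieAlgebra K L] (n : ℕ)
    (X : Fin n → Fin n → R →ₗ[K] L) (h : SteinbergRel K R n L X)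
    (i j k : Fin n) (hij : i ≠ j) (hik : i ≠ k) (hkj : k ≠ j) (a b : R) :
    ⁅X i j a, X j i b⁆ = ⁅X i k a, X k i b⁆ + ⁅X k j 1, X j k (b * a)⁆ := by
  have h1 : X i j a = ⁅X i k a, X k j 1⁆ := by
    rw [h.bracket_mul hik hkj hij, mul_one]
  have h2 : ⁅X k j (1 : R), X j i b⁆ = X k i b := by
    rw [h.bracket_mul hkj hij.symm hik.symm, one_mul]
  have h3 : ⁅X i k a, X j i b⁆ = - X j k (b * a) := by
    rw [← lie_skew, h.bracket_mul hij.symm hik hkj.symm]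
  rw [h1, lie_lie, h2, h3, lie_neg, sub_neg_eq_add]

/-- In `st_n(R)` (`n ≥ 3`), the element `t(a,b) = T_{1j}(a,b) - T_{1j}(1, ba)` does not depend
on the choice of `j ≠ 1` (the index `1` of the paper is `0 : Fin n` here), where
`T_{ij}(a,b) = ⁅X_{ij}(a), X_{ji}(b)⁆`. -/
theorem steinberg_t_well_defined (K R L : Type) [CommRing K] [Ring R] [Algebra K R]
    [LieRing L] [LieAlgebra K L] (n : ℕ) (hn : 3 ≤ n)
    (X : Fin n → Fin n → R →ₗ[K] L) (h : SteinbergRel K R n L X)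
    (j j' : Fin n) (hj : j ≠ ⟨0, by omega⟩) (hj' : j' ≠ ⟨0, by omega⟩) (a b : R) :
    ⁅X ⟨0, by omega⟩ j a, X j ⟨0, by omega⟩ b⁆
        - ⁅X ⟨0, by omega⟩ j 1, X j ⟨0, by omega⟩ (b * a)⁆
      = ⁅X ⟨0, by omega⟩ j' a, X j' ⟨0, by omega⟩ b⁆
        - ⁅X ⟨0, by omega⟩ j' 1, X j' ⟨0, by omega⟩ (b * a)⁆ := by
  by_cases hjj : j = j'
  · rw [hjj]
  · set z : Fin n := ⟨0, by omega⟩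
    have e1 := steinberg_T_shift K R L n X h z j j' hj.symm hj'.symm (Ne.symm hjj) a b
    have e2 := steinberg_T_shift K R L n X h z j j' hj.symm hj'.symm (Ne.symm hjj) 1 (b * a)
    rw [mul_one] at e2
    rw [e1, e2]
    abel
end

section
/- The subspace 𝔗 := Σ_{1≤i<j≤n} [X_{ij}(R), X_{ji}(R)] of st_n(R) is a Lie subalgebra, it contains the center of st_n(R), and [𝔗, X_{ij}(R)] ⊆ X_{ij}(R) for all i ≠ j. -/
/-- `L` together with the family `X` *is* the Steinberg Lie algebra `st_n(R)`:
the relations hold, `L` is generated by the `X_{ij}(a)`, and `(L, X)` is initial among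
Lie algebras equipped with such a family. -/
structure IsSteinberg (K R : Type) [CommRing K] [Ring R] [Algebra K R]
    (n : ℕ) (L : Type) [LieRing L] [LieAlgebra K L]
    (X : Fin n → Fin n → R →ₗ[K] L) extends SteinbergRel K R n L X : Prop where
  span_top : LieSubalgebra.lieSpan K L
    (⋃ (i : Fin n) (j : Fin n) (_ : i ≠ j), Set.range (X i j)) = ⊤
  initial : ∀ (L' : Type) [LieRing L'] [LieAlgebra K L']
    (X' : Fin n → Fin n → R →ₗ[K] L'), SteinbergRel K R n L' X' →
    ∃ f : L →ₗ⁅K⁆ L', ∀ i j a, f (X i j a) = X' i j a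


/-!
Everything reduces to the bracket of `h = ⁅X_{ij}(a), X_{ji}(b)⁆` with a root vector `X_{kl}(c)`,
which is again in `X_{kl}(R)`: for `{k, l} ≠ {i, j}` this follows from the defining relations,
and for `(k, l) = (i, j)` one writes `X_{ij}(c) = ⁅X_{im}(c), X_{mj}(1)⁆` with a third index `m`
and applies the Leibniz rule. Since `ad h` is a derivation, `𝔗` is then closed under the bracket.

For the center, `𝔗 + Σ_{i ≠ j} X_{ij}(R)` is stable under all `ad X_{kl}(c)`, hence is all of
`st_n(R)`. Realize `st_n(R) → gl_n(R)` by the universal property and let `D` send `w` to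
`Σ_{p ≠ q} X_{pq}(w_{pq})`, where `w_{pq}` are the entries of the image of `w`. Then `w - D w ∈ 𝔗`
for every `w`, while a central `z` maps to a scalar matrix, so `D z = 0`.
-/

section Torus

variable {K R L : Type*} [CommRing K] [AddCommMonoid R] [Module K R] [LieRing L]
  [LieAlgebra K L] {n : ℕ}

def steinbergTorus (X : Fin n → Fin n → R →ₗ[K] L) : Submodule K L :=
  ⨆ (i : Fin n) (j : Fin n) (_ : i < j),
    Submodule.span K {x : L | ∃ a b : R, x = ⁅X i j a, X j i b⁆}

variable {X : Fin n → Fin n → R →ₗ[K] L}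

theorem lie_mem_steinbergTorus_of_lt {i j : Fin n} (hij : i < j) (a b : R) :
    ⁅X i j a, X j i b⁆ ∈ steinbergTorus X :=
  Submodule.mem_iSup_of_mem i <| Submodule.mem_iSup_of_mem j <|
    Submodule.mem_iSup_of_mem hij <| Submodule.subset_span ⟨a, b, rfl⟩

theorem lie_mem_steinbergTorus_of_ne {i j : Fin n} (hij : i ≠ j) (a b : R) :
    ⁅X i j a, X j i b⁆ ∈ steinbergTorus X := by
  rcases hij.lt_or_gt with hij | hji
  · exact lie_mem_steinbergTorus_of_lt hij a b
  · rw [← lie_skew]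
    exact neg_mem (lie_mem_steinbergTorus_of_lt hji b a)

theorem steinbergTorus_le_iff {N : Submodule K L} :
    steinbergTorus X ≤ N ↔ ∀ i j : Fin n, i < j → ∀ a b : R, ⁅X i j a, X j i b⁆ ∈ N := by
  refine ⟨fun hN i j hij a b => hN (lie_mem_steinbergTorus_of_lt hij a b), fun hN => ?_⟩
  refine iSup_le fun i => iSup_le fun j => iSup_le fun hij => Submodule.span_le.2 ?_
  rintro x ⟨a, b, rfl⟩
  exact hN i j hij a b

def rootSpan (X : Fin n → Fin n → R →ₗ[K] L) : Submodule K L :=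
  ⨆ (i : Fin n) (j : Fin n) (_ : i ≠ j), LinearMap.range (X i j)

theorem range_le_rootSpan {i j : Fin n} (hij : i ≠ j) : LinearMap.range (X i j) ≤ rootSpan X :=
  le_iSup_of_le i <| le_iSup_of_le j <| le_iSup_of_le hij le_rfl

end Torus

section LieSpan

variable {K L : Type*} [CommRing K] [LieRing L] [LieAlgebra K L] {s : Set L}

theorem lie_mem_of_lieSpan_eq_top (hs : LieSubalgebra.lieSpan K L s = ⊤) {N : Submodule K L}
    (hN : ∀ g ∈ s, ∀ y ∈ N, ⁅g, y⁆ ∈ N) (x : L) {y : L} (hy : y ∈ N) : ⁅x, y⁆ ∈ N := by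
  have hx : x ∈ LieSubalgebra.lieSpan K L s := hs ▸ LieSubalgebra.mem_top x
  induction hx using LieSubalgebra.lieSpan_induction generalizing y with
  | mem g hg => exact hN g hg y hy
  | zero => simp
  | add x₁ x₂ _ _ h₁ h₂ => rw [add_lie]; exact add_mem (h₁ hy) (h₂ hy)
  | smul t x _ hx => rw [smul_lie]; exact Submodule.smul_mem _ t (hx hy)
  | lie x₁ x₂ _ _ h₁ h₂ => rw [lie_lie]; exact sub_mem (h₁ (h₂ hy)) (h₂ (h₁ hy))

theorem Submodule.eq_top_of_lieSpan_eq_top (hs : LieSubalgebra.lieSpan K L s = ⊤)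
    {N : Submodule K L} (hsN : s ⊆ N) (hN : ∀ g ∈ s, ∀ y ∈ N, ⁅g, y⁆ ∈ N) : N = ⊤ := by
  let N' : LieSubalgebra K L :=
    { N with lie_mem' := fun {x _} _ hy => lie_mem_of_lieSpan_eq_top hs hN x hy }
  have hN' : N' = ⊤ := eq_top_iff.2 (hs ▸ LieSubalgebra.lieSpan_le.2 hsN)
  exact congrArg LieSubalgebra.toSubmodule hN'

end LieSpan

namespace SteinbergRel

variable {K R L : Type} [CommRing K] [Ring R] [Algebra K R] [LieRing L] [LieAlgebra K L] {n : ℕ}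
  {X : Fin n → Fin n → R →ₗ[K] L} (hX : SteinbergRel K R n L X)
include hX

theorem lie_eq_neg {i j k : Fin n} (hij : i ≠ j) (hjk : j ≠ k) (hik : i ≠ k) (a b : R) :
    ⁅X j k b, X i j a⁆ = -X i k (a * b) := by
  rw [← lie_skew, hX.bracket_mul hij hjk hik]

theorem lie_lie_eq_of_same_row {i j l : Fin n} (hij : i ≠ j) (hil : i ≠ l) (hjl : j ≠ l)
    (a b c : R) : ⁅⁅X i j a, X j i b⁆, X i l c⁆ = X i l (a * (b * c)) := by
  rw [lie_lie, hX.bracket_mul hij.symm hil hjl, hX.bracket_mul hij hjl hil,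
    hX.bracket_zero hij hil hij.symm hil, lie_zero, sub_zero]

theorem lie_lie_eq_of_same_col {i j k : Fin n} (hij : i ≠ j) (hki : k ≠ i) (hkj : k ≠ j)
    (a b c : R) : ⁅⁅X i j a, X j i b⁆, X k j c⁆ = X k j (c * b * a) := by
  rw [lie_lie, hX.lie_eq_neg hkj hij.symm hki, hX.bracket_zero hij hkj hkj.symm hij, lie_zero,
    sub_zero, lie_neg, hX.lie_eq_neg hki hij hkj, neg_neg]

theorem lie_lie_eq_zero_of_disjoint {i j k l : Fin n} (hij : i ≠ j) (hkl : k ≠ l) (hki : k ≠ i)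
    (hkj : k ≠ j) (hli : l ≠ i) (hlj : l ≠ j) (a b c : R) : ⁅⁅X i j a, X j i b⁆, X k l c⁆ = 0 := by
  rw [lie_lie, hX.bracket_zero hij.symm hkl hki.symm hlj.symm,
    hX.bracket_zero hij hkl hkj.symm hli.symm, lie_zero, lie_zero, sub_zero]

theorem lie_lie_eq_of_same_root (hn : 2 < n) {i j : Fin n} (hij : i ≠ j) (a b c : R) :
    ⁅⁅X i j a, X j i b⁆, X i j c⁆ = X i j (a * b * c + c * b * a) := by
  obtain ⟨m, hmi, hmj⟩ := Fin.exists_ne_and_ne_of_two_lt i j hn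
  have hX_ij : X i j c = ⁅X i m c, X m j 1⁆ := by
    rw [hX.bracket_mul hmi.symm hmj hij, mul_one]
  rw [hX_ij, leibniz_lie, hX.lie_lie_eq_of_same_row hij hmi.symm hmj.symm,
    hX.lie_lie_eq_of_same_col hij hmi hmj, hX.bracket_mul hmi.symm hmj hij,
    hX.bracket_mul hmi.symm hmj hij, ← map_add]
  noncomm_ring

theorem lie_lie_mem_range (hn : 2 < n) {i j k l : Fin n} (hij : i ≠ j) (hkl : k ≠ l)
    (a b c : R) : ⁅⁅X i j a, X j i b⁆, X k l c⁆ ∈ LinearMap.range (X k l) := by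
  have hswap : ⁅X i j a, X j i b⁆ = -⁅X j i b, X i j a⁆ := (lie_skew _ _).symm
  rcases eq_or_ne k i with rfl | hki <;> rcases eq_or_ne l j with rfl | hlj
  · exact ⟨_, (hX.lie_lie_eq_of_same_root hn hij a b c).symm⟩
  · exact ⟨_, (hX.lie_lie_eq_of_same_row hij hkl hlj.symm a b c).symm⟩
  · exact ⟨_, (hX.lie_lie_eq_of_same_col hij hki hkl a b c).symm⟩
  · rcases eq_or_ne k j with rfl | hkj <;> rcases eq_or_ne l i with rfl | hli
    · rw [hswap, neg_lie]
      exact neg_mem ⟨_, (hX.lie_lie_eq_of_same_root hn hij.symm b a c).symm⟩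
    · rw [hswap, neg_lie]
      exact neg_mem ⟨_, (hX.lie_lie_eq_of_same_row hij.symm hkl hli.symm b a c).symm⟩
    · rw [hswap, neg_lie]
      exact neg_mem ⟨_, (hX.lie_lie_eq_of_same_col hij.symm hkj hkl b a c).symm⟩
    · rw [hX.lie_lie_eq_zero_of_disjoint hij hkl hki hkj hli hlj]
      exact zero_mem _

theorem lie_mem_steinbergTorus_sup_rootSpan {i j k l : Fin n} (hij : i ≠ j) (hkl : k ≠ l)
    (a b : R) : ⁅X i j a, X k l b⁆ ∈ steinbergTorus X ⊔ rootSpan X := by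
  have hrange {p q : Fin n} (hpq : p ≠ q) (c : R) : X p q c ∈ steinbergTorus X ⊔ rootSpan X :=
    Submodule.mem_sup_right (range_le_rootSpan hpq ⟨c, rfl⟩)
  rcases eq_or_ne j k with rfl | hjk <;> rcases eq_or_ne l i with rfl | hli
  · exact Submodule.mem_sup_left (lie_mem_steinbergTorus_of_ne hij a b)
  · rw [hX.bracket_mul hij hkl hli.symm]
    exact hrange hli.symm _
  · rw [hX.lie_eq_neg hkl hij hjk.symm]
    exact neg_mem (hrange hjk.symm _)
  · rw [hX.bracket_zero hij hkl hjk hli.symm]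
    exact zero_mem _

theorem lie_mem_range_of_mem_steinbergTorus (hn : 2 < n) {k l : Fin n} (hkl : k ≠ l) {x : L}
    (hx : x ∈ steinbergTorus X) (c : R) : ⁅x, X k l c⁆ ∈ LinearMap.range (X k l) := by
  suffices steinbergTorus X ≤ (LinearMap.range (X k l)).comap (LieAlgebra.ad K L (X k l c)) by
    rw [← lie_skew]
    exact neg_mem (this hx)
  refine steinbergTorus_le_iff.2 fun i j hij a b => ?_
  rw [Submodule.mem_comap, LieAlgebra.ad_apply, ← lie_skew]
  exact neg_mem (hX.lie_lie_mem_range hn hij.ne hkl a b c)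

theorem lie_mem_steinbergTorus (hn : 2 < n) {x y : L} (hx : x ∈ steinbergTorus X)
    (hy : y ∈ steinbergTorus X) : ⁅x, y⁆ ∈ steinbergTorus X := by
  suffices steinbergTorus X ≤ (steinbergTorus X).comap (LieAlgebra.ad K L x) from this hy
  refine steinbergTorus_le_iff.2 fun i j hij a b => ?_
  obtain ⟨a', ha'⟩ := hX.lie_mem_range_of_mem_steinbergTorus hn hij.ne hx a
  obtain ⟨b', hb'⟩ := hX.lie_mem_range_of_mem_steinbergTorus hn hij.ne' hx b
  rw [Submodule.mem_comap, LieAlgebra.ad_apply, leibniz_lie, ← ha', ← hb']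
  exact add_mem (lie_mem_steinbergTorus_of_lt hij a' b) (lie_mem_steinbergTorus_of_lt hij a b')

end SteinbergRel

theorem Matrix.liftLinear_diagonal_eq_zero {K α M : Type*} [CommSemiring K] [AddCommMonoid α]
    [Module K α] [AddCommMonoid M] [Module K M] {n : ℕ} {g : Fin n → Fin n → α →ₗ[K] M}
    (hg : ∀ p, g p p = 0) (d : Fin n → α) : Matrix.liftLinear K g (Matrix.diagonal d) = 0 := by
  rw [Matrix.liftLinear_apply]
  refine Finset.sum_eq_zero fun p _ => Finset.sum_eq_zero fun q _ => ?_
  rcases eq_or_ne p q with rfl | hpq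
  · rw [hg, LinearMap.zero_apply]
  · rw [Matrix.diagonal_apply_ne _ hpq, map_zero]

section MatrixModel

attribute [local instance] LieRing.ofAssociativeRing

theorem steinbergRel_singleLinearMap (K R : Type) [CommRing K] [Ring R] [Algebra K R] (n : ℕ) :
    SteinbergRel K R n (Matrix (Fin n) (Fin n) R) (Matrix.singleLinearMap K) where
  bracket_mul i j k _ _ hik a b := by
    simp only [Ring.lie_def, Matrix.singleLinearMap_apply]
    rw [Matrix.single_mul_single_same, Matrix.single_mul_single_of_ne (h := hik.symm), sub_zero]
  bracket_zero i j k l _ _ hjk hil a b := by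
    simp only [Ring.lie_def, Matrix.singleLinearMap_apply]
    rw [Matrix.single_mul_single_of_ne (h := hjk), Matrix.single_mul_single_of_ne (h := hil.symm),
      sub_zero]

end MatrixModel

namespace IsSteinberg

variable {K R L : Type} [CommRing K] [Ring R] [Algebra K R] [LieRing L] [LieAlgebra K L] {n : ℕ}
  {X : Fin n → Fin n → R →ₗ[K] L} (hX : IsSteinberg K R n L X)
include hX

theorem steinbergTorus_sup_rootSpan_eq_top (hn : 2 < n) : steinbergTorus X ⊔ rootSpan X = ⊤ := by
  refine Submodule.eq_top_of_lieSpan_eq_top hX.span_top ?_ ?_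
  · simp only [Set.iUnion_subset_iff]
    rintro i j hij _ ⟨a, rfl⟩
    exact Submodule.mem_sup_right (range_le_rootSpan hij ⟨a, rfl⟩)
  · simp only [Set.mem_iUnion, Set.mem_range]
    rintro _ ⟨k, l, hkl, c, rfl⟩ y hy
    suffices steinbergTorus X ⊔ rootSpan X ≤
        (steinbergTorus X ⊔ rootSpan X).comap (LieAlgebra.ad K L (X k l c)) from this hy
    refine sup_le (fun x hx => ?_) (iSup_le fun i => iSup_le fun j => iSup_le fun hij => ?_)
    · rw [Submodule.mem_comap, LieAlgebra.ad_apply, ← lie_skew]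
      exact neg_mem <| Submodule.mem_sup_right <| range_le_rootSpan hkl <|
        hX.lie_mem_range_of_mem_steinbergTorus hn hkl hx c
    · rintro _ ⟨a, rfl⟩
      exact hX.lie_mem_steinbergTorus_sup_rootSpan hkl hij c a

attribute [local instance] LieRing.ofAssociativeRing

theorem mem_steinbergTorus_of_mem_center (hn : 2 < n) {z : L}
    (hz : z ∈ LieAlgebra.center K L) : z ∈ steinbergTorus X := by
  obtain ⟨f, hf⟩ := hX.initial _ _ (steinbergRel_singleLinearMap K R n)
  let D : L →ₗ[K] L := Matrix.liftLinear K (fun p q => if p = q then 0 else X p q) ∘ₗ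
    (f : L →ₗ[K] Matrix (Fin n) (Fin n) R)
  have hD : steinbergTorus X ⊔ rootSpan X ≤ (steinbergTorus X).comap (LinearMap.id - D) := by
    refine sup_le (steinbergTorus_le_iff.2 fun i j hij a b => ?_)
      (iSup_le fun i => iSup_le fun j => iSup_le fun hij => ?_)
    · have hD_lie : D ⁅X i j a, X j i b⁆ = 0 := by
        simp [D, hf, Ring.lie_def]
      simpa [hD_lie] using lie_mem_steinbergTorus_of_lt hij a b
    · rintro _ ⟨a, rfl⟩
      simp [D, hf, hij]
  have hDz : D z = 0 := by
    obtain ⟨r, hr⟩ := Matrix.mem_range_scalar_of_commute_single (M := f z) fun i j _ => by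
      have hlie := congrArg f ((LieModule.mem_maxTrivSubmodule K L L z).mp hz (X i j 1))
      rwa [LieHom.map_lie, hf, map_zero, Ring.lie_def, sub_eq_zero] at hlie
    simp only [D, LinearMap.comp_apply, LieHom.coe_toLinearMap, ← hr, Matrix.scalar_apply]
    exact Matrix.liftLinear_diagonal_eq_zero (fun p => if_pos rfl) _
  have hzM : z ∈ steinbergTorus X ⊔ rootSpan X := by
    rw [hX.steinbergTorus_sup_rootSpan_eq_top hn]
    exact Submodule.mem_top
  simpa [hDz] using hD hzM

end IsSteinberg

/-- The subspace `𝔗 = Σ_{i<j} ⁅X_{ij}(R), X_{ji}(R)⁆` of the Steinberg Lie algebra `st_n(R)`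
is closed under the bracket (a Lie subalgebra), contains the center of `st_n(R)`, and
satisfies `⁅𝔗, X_{ij}(R)⁆ ⊆ X_{ij}(R)` for all `i ≠ j`. -/
theorem steinberg_T_subalgebra (K R L : Type) [CommRing K] [Ring R] [Algebra K R]
    [LieRing L] [LieAlgebra K L] (n : ℕ) (hn : 3 ≤ n)
    (X : Fin n → Fin n → R →ₗ[K] L) (h : IsSteinberg K R n L X)
    (T : Submodule K L)
    (hT : T = ⨆ (i : Fin n) (j : Fin n) (_ : i < j),
      Submodule.span K {x : L | ∃ a b : R, x = ⁅X i j a, X j i b⁆}) :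
    (∀ x ∈ T, ∀ y ∈ T, ⁅x, y⁆ ∈ T) ∧
    (∀ z ∈ LieAlgebra.center K L, z ∈ T) ∧
    (∀ i j : Fin n, i ≠ j → ∀ x ∈ T, ∀ a : R, ⁅x, X i j a⁆ ∈ LinearMap.range (X i j)) := by
  subst hT
  exact ⟨fun x hx y hy => h.lie_mem_steinbergTorus hn hx hy,
    fun z hz => h.mem_steinbergTorus_of_mem_center hn hz,
    fun i j hij x hx a => h.lie_mem_range_of_mem_steinbergTorus hn hij hx a⟩
end

section
/- The bilinear map ψ on st₄(R) with values in W = (R₂)⁶ defined by ψ(X_{ij}(a), X_{kl}(b)) = ε_{θ(i,j,k,l)}(‾ab) for pairwise distinct i,j,k,l (and ψ = 0 on all other pairs of basis elements of the decomposition of st₄(R)) is a Lie algebra 2-cocycle: it is alternating and satisfies ψ([x,y],z) + ψ([y,z],x) + ψ([z,x],y) = 0. -/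
section CommModTwo

variable (K R : Type) [CommRing K] [Ring R] [Algebra K R]

def twoCommSpan : Submodule K R :=
  Submodule.span K {x : R | ∃ a : R, x = 2 * a} ⊔
    Submodule.span K {x : R | ∃ c a b : R, x = c * (a * b - b * a)}

variable {K R}

lemma two_mul_mem_twoCommSpan (a : R) : 2 * a ∈ twoCommSpan K R :=
  Submodule.mem_sup_left (Submodule.subset_span ⟨a, rfl⟩)

lemma mul_commutator_mem_twoCommSpan (c a b : R) : c * (a * b - b * a) ∈ twoCommSpan K R :=
  Submodule.mem_sup_right (Submodule.subset_span ⟨c, a, b, rfl⟩)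

lemma twoCommSpan_eq_span : twoCommSpan K R =
    Submodule.span K ({x : R | ∃ a : R, x = 2 * a} ∪ {x | ∃ c a b : R, x = c * (a * b - b * a)}) :=
  (Submodule.span_union _ _).symm

lemma mul_mem_twoCommSpan_left (x : R) {y : R} (hy : y ∈ twoCommSpan K R) :
    x * y ∈ twoCommSpan K R := by
  rw [twoCommSpan_eq_span] at hy
  induction hy using Submodule.span_induction with
  | mem z hz =>
    rcases hz with ⟨a, rfl⟩ | ⟨c, a, b, rfl⟩
    · simpa only [← mul_assoc, (Commute.ofNat_right x 2).eq] using two_mul_mem_twoCommSpan (x * a)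
    · simpa only [← mul_assoc] using mul_commutator_mem_twoCommSpan (x * c) a b
  | zero => simp
  | add u v _ _ hu hv => simpa only [mul_add] using add_mem hu hv
  | smul k u _ hu => simpa only [mul_smul_comm] using Submodule.smul_mem _ k hu

lemma mul_mem_twoCommSpan_right {x : R} (hx : x ∈ twoCommSpan K R) (y : R) :
    x * y ∈ twoCommSpan K R := by
  rw [twoCommSpan_eq_span] at hx
  induction hx using Submodule.span_induction with
  | mem z hz =>
    rcases hz with ⟨a, rfl⟩ | ⟨c, a, b, rfl⟩
    · simpa only [mul_assoc] using two_mul_mem_twoCommSpan (a * y)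
    · have h : c * (a * b - b * a) * y
          = c * (a * (b * y) - b * y * a) - c * b * (a * y - y * a) := by noncomm_ring
      rw [h]
      exact sub_mem (mul_commutator_mem_twoCommSpan _ _ _) (mul_commutator_mem_twoCommSpan _ _ _)
  | zero => simp
  | add u v _ _ hu hv => simpa only [add_mul] using add_mem hu hv
  | smul k u _ hu => simpa only [smul_mul_assoc] using Submodule.smul_mem _ k hu

variable (K R)

def twoCommIdeal : TwoSidedIdeal R :=
  .mk' (twoCommSpan K R) (zero_mem _) add_mem neg_mem
    (mul_mem_twoCommSpan_left _) (mul_mem_twoCommSpan_right · _)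

/-- The ring `R₂ = R/(2R + R[R,R])` of the paper. -/
abbrev CommModTwo : Type := (twoCommIdeal K R).ringCon.Quotient

instance : CommRing (CommModTwo K R) where
  mul_comm := by
    rintro ⟨a⟩ ⟨b⟩
    refine (RingCon.eq _).mpr ?_
    show a * b - b * a ∈ twoCommSpan K R
    simpa using mul_commutator_mem_twoCommSpan (K := K) 1 a b

def toCommModTwo : R →ₐ[K] CommModTwo K R := RingCon.mkₐ K _

variable {K R}

lemma toCommModTwo_eq_zero_iff {x : R} : toCommModTwo K R x = 0 ↔ x ∈ twoCommSpan K R := by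
  rw [← map_zero (toCommModTwo K R), toCommModTwo]
  refine (RingCon.eq _).trans ?_
  show x - 0 ∈ twoCommSpan K R ↔ _
  rw [sub_zero]

lemma CommModTwo.two_eq_zero : (2 : CommModTwo K R) = 0 := by
  have h := (toCommModTwo_eq_zero_iff (K := K)).mpr (two_mul_mem_twoCommSpan (1 : R))
  rwa [mul_one, map_ofNat] at h

variable (K R) in
noncomputable def quotEquivCommModTwo : (R ⧸ twoCommSpan K R) ≃ₗ[K] CommModTwo K R :=
  (Submodule.quotEquivOfEq _ _ (by ext; exact (toCommModTwo_eq_zero_iff (K := K)).symm)).trans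
    ((toCommModTwo K R).toLinearMap.quotKerEquivOfSurjective (RingCon.mkₐ_surjective (α := K) _))

lemma quotEquivCommModTwo_symm_apply (a : R) :
    (quotEquivCommModTwo K R).symm (toCommModTwo K R a) = Submodule.Quotient.mk a :=
  (LinearEquiv.symm_apply_eq _).mpr <| by
    rw [quotEquivCommModTwo, LinearEquiv.trans_apply, Submodule.quotEquivOfEq_mk]
    exact (LinearMap.quotKerEquivOfSurjective_apply_mk (toCommModTwo K R).toLinearMap _ a).symm

end CommModTwo

section Steinberg

attribute [local instance] LieRing.ofAssociativeRing

open Matrix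

variable {K R L : Type} [CommRing K] [Ring R] [Algebra K R] [LieRing L] [LieAlgebra K L] {n : ℕ}

variable (K R n) in
lemma steinbergRel_single :
    SteinbergRel K R n (Matrix (Fin n) (Fin n) R) (fun i j => singleLinearMap K i j) where
  bracket_mul i j k _ _ hik a b := by
    rw [Ring.lie_def, singleLinearMap_apply, singleLinearMap_apply, singleLinearMap_apply,
      single_mul_single_same, single_mul_single_of_ne (h := Ne.symm hik), sub_zero]
  bracket_zero i j k l _ _ hjk hil a b := by
    rw [Ring.lie_def, singleLinearMap_apply, singleLinearMap_apply,
      single_mul_single_of_ne (h := hjk), single_mul_single_of_ne (h := Ne.symm hil), sub_zero]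

lemma SteinbergRel.comp_algHom {A : Type} [Ring A] [Algebra K A] {X : Fin n → Fin n → A →ₗ[K] L}
    (h : SteinbergRel K A n L X) (f : R →ₐ[K] A) :
    SteinbergRel K R n L (fun i j => X i j ∘ₗ f.toLinearMap) where
  bracket_mul i j k hij hjk hik a b := by simpa using h.bracket_mul hij hjk hik (f a) (f b)
  bracket_zero i j k l hij hkl hjk hil a b := h.bracket_zero hij hkl hjk hil (f a) (f b)

lemma IsSteinberg.trace_eq_zero {S : Type} [CommRing S] [Algebra K S]
    {X : Fin n → Fin n → R →ₗ[K] L} (hst : IsSteinberg K R n L X)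
    (f : L →ₗ⁅K⁆ Matrix (Fin n) (Fin n) S) (hf : ∀ i j, i ≠ j → ∀ a, (f (X i j a)).trace = 0)
    (x : L) : (f x).trace = 0 := by
  have hx : x ∈ LieSubalgebra.lieSpan K L (⋃ (i) (j) (_ : i ≠ j), Set.range (X i j)) := by
    simp [hst.span_top]
  induction hx using LieSubalgebra.lieSpan_induction with
  | mem y hy =>
    simp only [Set.mem_iUnion, Set.mem_range] at hy
    obtain ⟨i, j, hij, a, rfl⟩ := hy
    exact hf i j hij a
  | zero => simp
  | add y z _ _ hy hz => simp [hy, hz]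
  | smul c y _ hy => simp [hy]
  | lie y z _ _ _ _ => rw [LieHom.map_lie, Ring.lie_def, trace_sub, trace_mul_comm, sub_self]

lemma isDiag_lie_single_single {ι A : Type} [Fintype ι] [DecidableEq ι] [Ring A] (i j : ι)
    (a b : A) : (⁅single i j a, single j i b⁆ : Matrix ι ι A).IsDiag := by
  rw [Ring.lie_def, single_mul_single_same, single_mul_single_same]
  intro x y hxy
  simp only [Matrix.sub_apply, single_apply]
  grind

end Steinberg

section KleinFour

open Equiv

def kleinFour : Subgroup (Perm (Fin 4)) := Subgroup.closure {swap 0 2, swap 1 3}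

def kleinFourFinset : Finset (Perm (Fin 4)) := {1, swap 0 2, swap 1 3, swap 0 2 * swap 1 3}

lemma mem_kleinFour_iff {g : Perm (Fin 4)} : g ∈ kleinFour ↔ g ∈ kleinFourFinset := by
  constructor
  · intro hg
    induction hg using Subgroup.closure_induction with
    | mem x hx => rcases hx with rfl | rfl <;> decide
    | one => decide
    | mul x y _ _ hx hy =>
      have hmul : ∀ x ∈ kleinFourFinset, ∀ y ∈ kleinFourFinset, x * y ∈ kleinFourFinset := by
        decide
      exact hmul x hx y hy
    | inv x _ hx =>
      have hinv : ∀ x ∈ kleinFourFinset, x⁻¹ ∈ kleinFourFinset := by decide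
      exact hinv x hx
  · have hs : swap (0 : Fin 4) 2 ∈ kleinFour := Subgroup.subset_closure (by simp)
    have ht : swap (1 : Fin 4) 3 ∈ kleinFour := Subgroup.subset_closure (by simp)
    simp only [kleinFourFinset, Finset.mem_insert, Finset.mem_singleton]
    rintro (rfl | rfl | rfl | rfl)
    exacts [one_mem _, hs, ht, mul_mem hs ht]

open scoped Classical in
lemma sum_ite_mk_eq_sum_mul {G M : Type} [Group G] [Fintype G] [AddCommMonoid M]
    (H : Subgroup G) (σ : G) (f : G → M) :
    ∑ τ : G, (if (τ : G ⧸ H) = σ then f τ else 0) = ∑ h ∈ Finset.univ.filter (· ∈ H), f (σ * h) := by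
  rw [Finset.sum_filter]
  refine (Fintype.sum_equiv (Equiv.mulLeft σ) _ _ fun g => ?_).symm
  simp [QuotientGroup.eq]

end KleinFour

section CosetForm

open Equiv Matrix

variable {K S : Type} [CommSemiring K] [Semiring S] [Algebra K S]

variable (K S) in
open scoped Classical in
noncomputable def cosetForm (H : Subgroup (Perm (Fin 4))) :
    Matrix (Fin 4) (Fin 4) S →ₗ[K] Matrix (Fin 4) (Fin 4) S →ₗ[K] (Perm (Fin 4) ⧸ H → S) :=
  LinearMap.mk₂ K
    (fun M N q => ∑ τ : Perm (Fin 4),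
      if (τ : Perm (Fin 4) ⧸ H) = q then M (τ 0) (τ 1) * N (τ 2) (τ 3) else 0)
    (fun M M' N => by ext; simp [add_mul, Finset.sum_add_distrib, ite_add_zero])
    (fun c M N => by ext; simp [Finset.smul_sum])
    (fun M N N' => by ext; simp [mul_add, Finset.sum_add_distrib, ite_add_zero])
    (fun c M N => by ext; simp [Finset.smul_sum])

open scoped Classical in
lemma cosetForm_apply (H : Subgroup (Perm (Fin 4))) (M N : Matrix (Fin 4) (Fin 4) S)
    (q : Perm (Fin 4) ⧸ H) : cosetForm K S H M N q = ∑ τ : Perm (Fin 4),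
      if (τ : Perm (Fin 4) ⧸ H) = q then M (τ 0) (τ 1) * N (τ 2) (τ 3) else 0 :=
  rfl

lemma single_apply_mul_single_apply {n : Type} [DecidableEq n] (i j k l x y z w : n) (a b : S) :
    single i j a x y * single k l b z w = if i = x ∧ j = y ∧ k = z ∧ l = w then a * b else 0 := by
  simp only [single_apply]
  split_ifs <;> simp_all

open scoped Classical in
lemma cosetForm_single_single (H : Subgroup (Perm (Fin 4))) (σ : Perm (Fin 4)) (a b : S) :
    cosetForm K S H (single (σ 0) (σ 1) a) (single (σ 2) (σ 3) b)
      = Function.update (0 : Perm (Fin 4) ⧸ H → S) σ (a * b) := by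
  ext q
  rw [cosetForm_apply, Finset.sum_eq_single σ (fun τ _ hτ => ?_) (by simp)]
  · by_cases hq : (σ : Perm (Fin 4) ⧸ H) = q
    · subst hq
      simp
    · simp [hq, Function.update_of_ne (Ne.symm hq)]
  · have hne : ¬(σ 0 = τ 0 ∧ σ 1 = τ 1 ∧ σ 2 = τ 2 ∧ σ 3 = τ 3) := by
      rintro ⟨h0, h1, h2, h3⟩
      exact hτ (Equiv.ext fun m => by fin_cases m <;> simp [*])
    simp [single_apply_mul_single_apply, hne]

lemma cosetForm_single_single_of_not_injective (H : Subgroup (Perm (Fin 4))) {i j k l : Fin 4}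
    (h : ¬ Function.Injective ![i, j, k, l]) (a b : S) :
    cosetForm K S H (single i j a) (single k l b) = 0 := by
  ext q
  rw [cosetForm_apply, Pi.zero_apply]
  refine Finset.sum_eq_zero fun τ _ => ?_
  have hne : ¬(i = τ 0 ∧ j = τ 1 ∧ k = τ 2 ∧ l = τ 3) := by
    rintro ⟨rfl, rfl, rfl, rfl⟩
    refine h ?_
    convert τ.injective using 1
    ext m
    fin_cases m <;> rfl
  simp [single_apply_mul_single_apply, hne]

lemma cosetForm_of_isDiag (H : Subgroup (Perm (Fin 4))) {M : Matrix (Fin 4) (Fin 4) S}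
    (hM : M.IsDiag) (N : Matrix (Fin 4) (Fin 4) S) : cosetForm K S H M N = 0 := by
  ext q
  rw [cosetForm_apply, Pi.zero_apply]
  refine Finset.sum_eq_zero fun τ _ => ?_
  rw [hM (τ.injective.ne (by decide)), zero_mul, ite_self]

end CosetForm

section KleinMinorForm

open Equiv Matrix

variable {K S : Type} [CommSemiring K] [CommRing S] [Algebra K S]

def kleinMinorForm (M N : Matrix (Fin 4) (Fin 4) S) : S :=
  M 0 1 * N 2 3 + M 2 1 * N 0 3 + M 0 3 * N 2 1 + M 2 3 * N 0 1

lemma cosetForm_mk (M N : Matrix (Fin 4) (Fin 4) S) (σ : Perm (Fin 4)) :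
    cosetForm K S kleinFour M N σ = kleinMinorForm (M.submatrix σ σ) (N.submatrix σ σ) := by
  classical
  have hfilter : Finset.univ.filter (· ∈ kleinFour) = kleinFourFinset := by
    ext g
    simp [mem_kleinFour_iff]
  rw [cosetForm_apply, sum_ite_mk_eq_sum_mul, hfilter, kleinFourFinset,
    Finset.sum_insert (by decide), Finset.sum_insert (by decide), Finset.sum_insert (by decide),
    Finset.sum_singleton]
  simp [kleinMinorForm, swap_apply_of_ne_of_ne, add_assoc]

lemma kleinMinorForm_self (h2 : (2 : S) = 0) (M : Matrix (Fin 4) (Fin 4) S) :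
    kleinMinorForm M M = 0 := by
  unfold kleinMinorForm
  linear_combination (M 0 1 * M 2 3 + M 2 1 * M 0 3) * h2

lemma kleinMinorForm_lie_cocycle (h2 : (2 : S) = 0) (A B C : Matrix (Fin 4) (Fin 4) S) :
    kleinMinorForm ⁅A, B⁆ C + kleinMinorForm ⁅B, C⁆ A + kleinMinorForm ⁅C, A⁆ B
      = A.trace * kleinMinorForm B C + B.trace * kleinMinorForm C A
        + C.trace * kleinMinorForm A B := by
  rw [← sub_eq_zero]
  simp only [kleinMinorForm, Ring.lie_def, Matrix.sub_apply, mul_apply, Fin.sum_univ_four, trace,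
    diag]
  -- every coefficient of the difference is `± 2`
  ring_nf
  simp [h2]

lemma lie_submatrix (A B : Matrix (Fin 4) (Fin 4) S) (σ : Perm (Fin 4)) :
    ⁅A, B⁆.submatrix σ σ = ⁅A.submatrix σ σ, B.submatrix σ σ⁆ := by
  simp [Ring.lie_def, submatrix_mul_equiv, submatrix_sub]

lemma trace_submatrix_perm (A : Matrix (Fin 4) (Fin 4) S) (σ : Perm (Fin 4)) :
    (A.submatrix σ σ).trace = A.trace :=
  Equiv.sum_comp σ (fun i => A i i)

lemma cosetForm_self (h2 : (2 : S) = 0) (M : Matrix (Fin 4) (Fin 4) S) :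
    cosetForm K S kleinFour M M = 0 := by
  ext q
  induction q using QuotientGroup.induction_on with
  | H σ => rw [cosetForm_mk, kleinMinorForm_self h2, Pi.zero_apply]

lemma cosetForm_lie_cocycle (h2 : (2 : S) = 0) {A B C : Matrix (Fin 4) (Fin 4) S}
    (hA : A.trace = 0) (hB : B.trace = 0) (hC : C.trace = 0) :
    cosetForm K S kleinFour ⁅A, B⁆ C + cosetForm K S kleinFour ⁅B, C⁆ A
      + cosetForm K S kleinFour ⁅C, A⁆ B = 0 := by
  ext q
  induction q using QuotientGroup.induction_on with
  | H σ =>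
    simp only [Pi.add_apply, cosetForm_mk, lie_submatrix, kleinMinorForm_lie_cocycle h2,
      trace_submatrix_perm, hA, hB, hC, zero_mul, add_zero, Pi.zero_apply]

end KleinMinorForm

section CosetCocycle

attribute [local instance] LieRing.ofAssociativeRing

variable {K R L : Type} [CommRing K] [Ring R] [Algebra K R] [LieRing L] [LieAlgebra K L]

variable (φ : L →ₗ⁅K⁆ Matrix (Fin 4) (Fin 4) (CommModTwo K R))

noncomputable def cosetCocycle :
    L →ₗ[K] L →ₗ[K] (Equiv.Perm (Fin 4) ⧸ kleinFour → R ⧸ twoCommSpan K R) :=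
  ((cosetForm K _ kleinFour).compl₁₂ φ.toLinearMap φ.toLinearMap).compr₂
    ((quotEquivCommModTwo K R).symm.toLinearMap.compLeft _)

lemma cosetCocycle_apply (x y : L) (q : Equiv.Perm (Fin 4) ⧸ kleinFour) :
    cosetCocycle φ x y q = (quotEquivCommModTwo K R).symm (cosetForm K _ kleinFour (φ x) (φ y) q) :=
  rfl

lemma cosetCocycle_self (x : L) : cosetCocycle φ x x = 0 := by
  ext q
  rw [cosetCocycle_apply, cosetForm_self CommModTwo.two_eq_zero, Pi.zero_apply, map_zero,
    Pi.zero_apply]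

lemma cosetCocycle_lie_cocycle (htr : ∀ x, (φ x).trace = 0) (x y z : L) :
    cosetCocycle φ ⁅x, y⁆ z + cosetCocycle φ ⁅y, z⁆ x + cosetCocycle φ ⁅z, x⁆ y = 0 := by
  ext q
  simp only [Pi.add_apply, cosetCocycle_apply, LieHom.map_lie, ← map_add]
  rw [← Pi.add_apply, ← Pi.add_apply,
    cosetForm_lie_cocycle CommModTwo.two_eq_zero (htr x) (htr y) (htr z), Pi.zero_apply, map_zero,
    Pi.zero_apply]

variable {φ} {X : Fin 4 → Fin 4 → R →ₗ[K] L}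

open scoped Classical in
lemma cosetCocycle_generator_generator
    (hφ : ∀ i j a, φ (X i j a) = Matrix.single i j (toCommModTwo K R a))
    (σ : Equiv.Perm (Fin 4)) (a b : R) :
    cosetCocycle φ (X (σ 0) (σ 1) a) (X (σ 2) (σ 3) b)
      = Function.update (0 : Equiv.Perm (Fin 4) ⧸ kleinFour → R ⧸ twoCommSpan K R) σ
          (Submodule.Quotient.mk (a * b)) := by
  ext q
  rw [cosetCocycle_apply, hφ, hφ, cosetForm_single_single, ← map_mul]
  by_cases hq : q = σ
  · subst hq
    rw [Function.update_self, Function.update_self, quotEquivCommModTwo_symm_apply]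
  · simp [hq]

lemma cosetCocycle_generator_generator_of_not_injective
    (hφ : ∀ i j a, φ (X i j a) = Matrix.single i j (toCommModTwo K R a)) {i j k l : Fin 4}
    (h : ¬ Function.Injective ![i, j, k, l]) (a b : R) :
    cosetCocycle φ (X i j a) (X k l b) = 0 := by
  ext q
  rw [cosetCocycle_apply, hφ, hφ, cosetForm_single_single_of_not_injective _ h, Pi.zero_apply,
    map_zero, Pi.zero_apply]

lemma cosetCocycle_lie_generator_generator
    (hφ : ∀ i j a, φ (X i j a) = Matrix.single i j (toCommModTwo K R a)) (i j : Fin 4) (a b : R)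
    (x : L) : cosetCocycle φ ⁅X i j a, X j i b⁆ x = 0 := by
  ext q
  rw [cosetCocycle_apply, LieHom.map_lie, hφ, hφ,
    cosetForm_of_isDiag _ (isDiag_lie_single_single _ _ _ _), Pi.zero_apply, map_zero,
    Pi.zero_apply]

end CosetCocycle

open scoped Classical in
theorem steinberg_st4_cocycle_general (K R L : Type) [CommRing K] [Ring R] [Algebra K R]
    [LieRing L] [LieAlgebra K L]
    (X : Fin 4 → Fin 4 → R →ₗ[K] L) (hst : IsSteinberg K R 4 L X)
    (I2 : Submodule K R)
    (hI2 : I2 = Submodule.span K {x : R | ∃ a : R, x = 2 * a} ⊔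
      Submodule.span K {x : R | ∃ c a b : R, x = c * (a * b - b * a)})
    (H : Subgroup (Equiv.Perm (Fin 4)))
    (hH : H = Subgroup.closure {Equiv.swap 0 2, Equiv.swap 1 3}) :
    ∃ ψ : L →ₗ[K] L →ₗ[K] ((Equiv.Perm (Fin 4) ⧸ H) → R ⧸ I2),
      -- values on pairs of generators with pairwise distinct indices
      (∀ (σ : Equiv.Perm (Fin 4)) (a b : R),
        ψ (X (σ 0) (σ 1) a) (X (σ 2) (σ 3) b)
          = Function.update (0 : (Equiv.Perm (Fin 4) ⧸ H) → R ⧸ I2)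
              (QuotientGroup.mk σ) (Submodule.Quotient.mk (a * b))) ∧
      -- `ψ` vanishes on the other pairs of generators
      (∀ i j k l : Fin 4, i ≠ j → k ≠ l → ¬(j ≠ k ∧ i ≠ l ∧ i ≠ k ∧ j ≠ l) →
        ∀ a b : R, ψ (X i j a) (X k l b) = 0) ∧
      -- `ψ` vanishes on the subalgebra `𝔗`
      (∀ i j : Fin 4, i ≠ j → ∀ a b : R, ∀ x : L, ψ ⁅X i j a, X j i b⁆ x = 0) ∧
      -- `ψ` is alternating
      (∀ x : L, ψ x x = 0) ∧
      -- cocycle identity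
      (∀ x y z : L, ψ ⁅x, y⁆ z + ψ ⁅y, z⁆ x + ψ ⁅z, x⁆ y = 0) := by
  obtain rfl : I2 = twoCommSpan K R := hI2
  obtain rfl : H = kleinFour := hH
  let _ : LieRing (Matrix (Fin 4) (Fin 4) (CommModTwo K R)) := LieRing.ofAssociativeRing
  obtain ⟨φ, hφ⟩ := hst.initial _ _
    ((steinbergRel_single K (CommModTwo K R) 4).comp_algHom (toCommModTwo K R))
  have htr := hst.trace_eq_zero φ fun i j hij a => by
    rw [hφ]
    exact Matrix.trace_single_eq_of_ne _ _ _ hij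
  refine ⟨cosetCocycle φ, cosetCocycle_generator_generator hφ,
    fun i j k l _ _ hn => cosetCocycle_generator_generator_of_not_injective hφ fun hinj => ?_,
    fun i j _ => cosetCocycle_lie_generator_generator hφ i j, cosetCocycle_self φ,
    cosetCocycle_lie_cocycle φ htr⟩
  exact hn ⟨hinj.ne (by decide : (1 : Fin 4) ≠ 2), hinj.ne (by decide : (0 : Fin 4) ≠ 3),
    hinj.ne (by decide : (0 : Fin 4) ≠ 2), hinj.ne (by decide : (1 : Fin 4) ≠ 3)⟩

open scoped Classical in
/-- The bilinear map `ψ` on `st₄(R)` with values in `W = (R₂)⁶` (six copies of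
`R₂ = R/(2R + R[R,R])`, indexed by the six left cosets of the Klein four-group
`H = {1,(13),(24),(13)(24)}` in `S₄`), defined by
`ψ(X_{ij}(a), X_{kl}(b)) = ε_{θ(i,j,k,l)}(‾ab)` for pairwise distinct `i,j,k,l` and `ψ = 0`
on all other pairs coming from the standard decomposition of `st₄(R)`, is an alternating
2-cocycle. Here a pairwise distinct quadruple is written `(σ 0, σ 1, σ 2, σ 3)` for
`σ ∈ S₄`, and `θ(i,j,k,l)` is the coset `σH`. -/
theorem steinberg_st4_cocycle (K R L : Type) [CommRing K] [Ring R] [Algebra K R]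
    [LieRing L] [LieAlgebra K L]
    (hbasis : ∃ (ι : Type) (b : Module.Basis ι K R) (i₀ : ι), b i₀ = 1)
    (X : Fin 4 → Fin 4 → R →ₗ[K] L) (hst : IsSteinberg K R 4 L X)
    (I2 : Submodule K R)
    (hI2 : I2 = Submodule.span K {x : R | ∃ a : R, x = 2 * a} ⊔
      Submodule.span K {x : R | ∃ c a b : R, x = c * (a * b - b * a)})
    (H : Subgroup (Equiv.Perm (Fin 4)))
    (hH : H = Subgroup.closure {Equiv.swap 0 2, Equiv.swap 1 3}) :
    ∃ ψ : L →ₗ[K] L →ₗ[K] ((Equiv.Perm (Fin 4) ⧸ H) → R ⧸ I2),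
      -- values on pairs of generators with pairwise distinct indices
      (∀ (σ : Equiv.Perm (Fin 4)) (a b : R),
        ψ (X (σ 0) (σ 1) a) (X (σ 2) (σ 3) b)
          = Function.update (0 : (Equiv.Perm (Fin 4) ⧸ H) → R ⧸ I2)
              (QuotientGroup.mk σ) (Submodule.Quotient.mk (a * b))) ∧
      -- `ψ` vanishes on the other pairs of generators
      (∀ i j k l : Fin 4, i ≠ j → k ≠ l → ¬(j ≠ k ∧ i ≠ l ∧ i ≠ k ∧ j ≠ l) →
        ∀ a b : R, ψ (X i j a) (X k l b) = 0) ∧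
      -- `ψ` vanishes on the subalgebra `𝔗`
      (∀ i j : Fin 4, i ≠ j → ∀ a b : R, ∀ x : L, ψ ⁅X i j a, X j i b⁆ x = 0) ∧
      -- `ψ` is alternating
      (∀ x : L, ψ x x = 0) ∧
      -- cocycle identity
      (∀ x y z : L, ψ ⁅x, y⁆ z + ψ ⁅y, z⁆ x + ψ ⁅z, x⁆ y = 0) :=
  steinberg_st4_cocycle_general K R L X hst I2 hI2 H hH
end

section
/- Let τ: L → st₄(R) be a central extension with kernel V, and let X̃_{ij}(a) be preimages of X_{ij}(a) normalized so that [X̃_{ik}(a), X̃_{kj}(b)] = X̃_{ij}(ab) for distinct i,j,k. Then for pairwise distinct i,j,k,l, the element ν^{ij}_{kl}(a,b) := [X̃_{ij}(a), X̃_{kl}(b)] ∈ V satisfies 2ν^{ij}_{kl}(a,b) = 0. -/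
/-- Let `τ : L → st₄(R)` be a central extension and `X̃_{ij}(a)` preimages of the generators
normalized so that `⁅X̃_{ik}(a), X̃_{kj}(b)⁆ = X̃_{ij}(ab)` for distinct `i,j,k`. Then for
pairwise distinct `i,j,k,l` the central element
`ν^{ij}_{kl}(a,b) = ⁅X̃_{ij}(a), X̃_{kl}(b)⁆` satisfies `2 ν^{ij}_{kl}(a,b) = 0`. -/
theorem steinberg_st4_nu_two_torsion
    (K R St L : Type) [CommRing K] [Ring R] [Algebra K R]
    [LieRing St] [LieAlgebra K St] [LieRing L] [LieAlgebra K L]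
    (X : Fin 4 → Fin 4 → R →ₗ[K] St) (hst : IsSteinberg K R 4 St X)
    (τ : L →ₗ⁅K⁆ St) (hsurj : Function.Surjective τ)
    (hcent : ∀ z : L, τ z = 0 → ∀ w : L, ⁅z, w⁆ = 0)
    (Xt : Fin 4 → Fin 4 → R →ₗ[K] L)
    (hpre : ∀ i j : Fin 4, i ≠ j → ∀ a : R, τ (Xt i j a) = X i j a)
    (hnorm : ∀ i j k : Fin 4, i ≠ j → j ≠ k → i ≠ k → ∀ a b : R,
      ⁅Xt i k a, Xt k j b⁆ = Xt i j (a * b))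
    (i j k l : Fin 4) (hij : i ≠ j) (hik : i ≠ k) (hil : i ≠ l)
    (hjk : j ≠ k) (hjl : j ≠ l) (hkl : k ≠ l) (a b : R) :
    (2 : ℤ) • ⁅Xt i j a, Xt k l b⁆ = 0 := by
  -- Central elements: brackets mapping to zero under τ are central.
  have hc : ∀ (p q r s : Fin 4), p ≠ q → r ≠ s → q ≠ r → p ≠ s → ∀ (c d : R) (w : L),
      ⁅⁅Xt p q c, Xt r s d⁆, w⁆ = 0 := by
    intro p q r s h1 h2 h3 h4 c d w
    apply hcent
    rw [LieHom.map_lie, hpre p q h1, hpre r s h2, hst.bracket_zero h1 h2 h3 h4]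
  -- Identity A: ν^{pq}_{rs}(c,d) = ν^{ps}_{rq}(cd,1)
  have hA : ∀ (p q r s : Fin 4), p ≠ q → p ≠ r → p ≠ s → q ≠ r → q ≠ s → r ≠ s →
      ∀ c d : R, ⁅Xt p q c, Xt r s d⁆ = ⁅Xt p s (c * d), Xt r q 1⁆ := by
    intro p q r s hpq hpr hps hqr hqs hrs c d
    have e1 : Xt p q c = ⁅Xt p r c, Xt r q 1⁆ := by
      rw [hnorm p q r hpq hqr hpr, mul_one]
    rw [e1, lie_lie]
    have t1 : ⁅Xt p r c, ⁅Xt r q (1:R), Xt r s d⁆⁆ = 0 := by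
      rw [← lie_skew, hc r q r s hqr.symm hrs hqr hrs, neg_zero]
    rw [t1, hnorm p s r hps hrs.symm hpr, ← lie_skew, zero_sub, neg_neg]
  -- Identity B: ν^{pq}_{rs}(c,d) = -ν^{ps}_{rq}(c,d)
  have hB : ∀ (p q r s : Fin 4), p ≠ q → p ≠ r → p ≠ s → q ≠ r → q ≠ s → r ≠ s →
      ∀ c d : R, ⁅Xt p q c, Xt r s d⁆ = -⁅Xt p s c, Xt r q d⁆ := by
    intro p q r s hpq hpr hps hqr hqs hrs c d
    have e1 : Xt p q c = ⁅Xt p s c, Xt s q 1⁆ := by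
      rw [hnorm p q s hpq hqs hps, mul_one]
    rw [e1, lie_lie]
    have t2 : ⁅Xt s q (1:R), ⁅Xt p s c, Xt r s d⁆⁆ = 0 := by
      rw [← lie_skew, hc p s r s hps hrs hrs.symm hps, neg_zero]
    have t1 : ⁅Xt s q (1:R), Xt r s d⁆ = -Xt r q d := by
      rw [← lie_skew, hnorm r q s hqr.symm hqs hrs, mul_one]
    rw [t2, t1, lie_neg, sub_zero]
  have e1 : ⁅Xt i j a, Xt k l b⁆ = ⁅Xt i l (a * b), Xt k j 1⁆ :=
    hA i j k l hij hik hil hjk hjl hkl a b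
  have e2 : ⁅Xt i j (a * b), Xt k l 1⁆ = ⁅Xt i l (a * b), Xt k j 1⁆ := by
    have := hA i j k l hij hik hil hjk hjl hkl (a * b) 1
    rwa [mul_one] at this
  have e3 : ⁅Xt i j (a * b), Xt k l 1⁆ = -⁅Xt i l (a * b), Xt k j 1⁆ :=
    hB i j k l hij hik hil hjk hjl hkl (a * b) 1
  have hv : ⁅Xt i l (a * b), Xt k j (1:R)⁆ = -⁅Xt i l (a * b), Xt k j (1:R)⁆ :=
    e2.symm.trans e3
  rw [e1, two_smul]
  nth_rewrite 2 [hv]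
  exact add_neg_cancel _
end

section
/- In the setting of a central extension τ: L → st₄(R) with normalized preimages X̃_{ij}(a), for pairwise distinct i,j,k,l one has ν^{il}_{kj}(bc, a) = ν^{ij}_{kl}(ba, c), and consequently ν^{ij}_{kl}(a,b) = ν^{ij}_{kl}(ba, 1). -/
/-- In the setting of a central extension `τ : L → st₄(R)` with normalized preimages
`X̃_{ij}(a)`, for pairwise distinct `i,j,k,l` one has
`ν^{il}_{kj}(bc, a) = ν^{ij}_{kl}(ba, c)`, and consequently
`ν^{ij}_{kl}(a,b) = ν^{ij}_{kl}(ba, 1)`, where `ν^{ij}_{kl}(a,b) = ⁅X̃_{ij}(a), X̃_{kl}(b)⁆`. -/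
theorem steinberg_st4_nu_shift
    (K R St L : Type) [CommRing K] [Ring R] [Algebra K R]
    [LieRing St] [LieAlgebra K St] [LieRing L] [LieAlgebra K L]
    (X : Fin 4 → Fin 4 → R →ₗ[K] St) (hst : IsSteinberg K R 4 St X)
    (τ : L →ₗ⁅K⁆ St) (hsurj : Function.Surjective τ)
    (hcent : ∀ z : L, τ z = 0 → ∀ w : L, ⁅z, w⁆ = 0)
    (Xt : Fin 4 → Fin 4 → R →ₗ[K] L)
    (hpre : ∀ i j : Fin 4, i ≠ j → ∀ a : R, τ (Xt i j a) = X i j a)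
    (hnorm : ∀ i j k : Fin 4, i ≠ j → j ≠ k → i ≠ k → ∀ a b : R,
      ⁅Xt i k a, Xt k j b⁆ = Xt i j (a * b))
    (i j k l : Fin 4) (hij : i ≠ j) (hik : i ≠ k) (hil : i ≠ l)
    (hjk : j ≠ k) (hjl : j ≠ l) (hkl : k ≠ l) (a b c : R) :
    ⁅Xt i l (b * c), Xt k j a⁆ = ⁅Xt i j (b * a), Xt k l c⁆ ∧
    ⁅Xt i j a, Xt k l b⁆ = ⁅Xt i j (b * a), Xt k l 1⁆ := by

  classical
  -- elements ⁅Xt p q a, Xt r s b⁆ with the `bracket_zero` index pattern are central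
  have cent : ∀ (p q r s : Fin 4), p ≠ q → r ≠ s → q ≠ r → p ≠ s → ∀ (x y : R) (w : L),
      ⁅(⁅Xt p q x, Xt r s y⁆ : L), w⁆ = 0 := by
    intro p q r s h1 h2 h3 h4 x y w
    apply hcent
    rw [LieHom.map_lie, hpre p q h1, hpre r s h2,
      hst.toSteinbergRel.bracket_zero h1 h2 h3 h4]
  have centR : ∀ (p q r s : Fin 4), p ≠ q → r ≠ s → q ≠ r → p ≠ s → ∀ (x y : R) (w : L),
      ⁅w, (⁅Xt p q x, Xt r s y⁆ : L)⁆ = 0 := by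
    intro p q r s h1 h2 h3 h4 x y w
    rw [← lie_skew, cent p q r s h1 h2 h3 h4, neg_zero]
  -- identity (1)
  have L1 : ∀ (p q r s : Fin 4), p ≠ q → p ≠ r → p ≠ s → q ≠ r → q ≠ s → r ≠ s →
      ∀ x y z : R, ⁅Xt p s (y * z), Xt r q x⁆ = -⁅Xt p q y, Xt r s (x * z)⁆ := by
    intro p q r s hpq hpr hps hqr hqs hrs x y z
    rw [← hnorm p s q hps (Ne.symm hqs) hpq y z, lie_lie]
    have e2 : ⁅Xt q s z, Xt r q x⁆ = -Xt r s (x * z) := by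
      rw [← lie_skew, hnorm r s q hrs (Ne.symm hqs) (Ne.symm hqr) x z]
    have e3 : ⁅Xt q s z, (⁅Xt p q y, Xt r q x⁆ : L)⁆ = 0 :=
      centR p q r q hpq (Ne.symm hqr) hqr hpq y x _
    rw [e2, e3, sub_zero, lie_neg]
  -- identity (3)
  have L3 : ∀ (p q r s : Fin 4), p ≠ q → p ≠ r → p ≠ s → q ≠ r → q ≠ s → r ≠ s →
      ∀ x y z : R, ⁅Xt p q x, Xt r s (y * z)⁆ = ⁅Xt p s z, Xt r q (y * x)⁆ := by
    intro p q r s hpq hpr hps hqr hqs hrs x y z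
    rw [← hnorm r s p hrs (Ne.symm hps) (Ne.symm hpr) y z, leibniz_lie]
    have e2 : ⁅Xt p q x, Xt r p y⁆ = -Xt r q (y * x) := by
      rw [← lie_skew, hnorm r q p (Ne.symm hqr) (Ne.symm hpq) (Ne.symm hpr) y x]
    have e3 : ⁅Xt r p y, (⁅Xt p q x, Xt p s z⁆ : L)⁆ = 0 :=
      centR p q p s hpq hps (Ne.symm hpq) hps x z _
    rw [e2, e3, add_zero, neg_lie, ← lie_skew, neg_neg]
  -- identity (4)
  have L4 : ∀ (p q r s : Fin 4), p ≠ q → p ≠ r → p ≠ s → q ≠ r → q ≠ s → r ≠ s →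
      ∀ x y z : R, ⁅Xt p s x, Xt r q (y * z)⁆ = -⁅Xt p q (x * z), Xt r s y⁆ := by
    intro p q r s hpq hpr hps hqr hqs hrs x y z
    rw [← hnorm r q s (Ne.symm hqr) hqs hrs y z, leibniz_lie]
    have e1 : ⁅(⁅Xt p s x, Xt r s y⁆ : L), Xt s q z⁆ = 0 :=
      cent p s r s hps hrs (Ne.symm hrs) hps x y _
    rw [e1, zero_add, hnorm p q s hpq hqs hps x z, ← lie_skew]
  -- specializations
  have hG1 : ∀ x y z : R, ⁅Xt i l (y * z), Xt k j x⁆ = -⁅Xt i j y, Xt k l (x * z)⁆ :=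
    L1 i j k l hij hik hil hjk hjl hkl
  have hF1 : ∀ x y z : R, ⁅Xt i j (y * z), Xt k l x⁆ = -⁅Xt i l y, Xt k j (x * z)⁆ :=
    L1 i l k j hil hik hij (Ne.symm hkl) (Ne.symm hjl) (Ne.symm hjk)
  have hG4 : ∀ x y z : R, ⁅Xt i l x, Xt k j (y * z)⁆ = -⁅Xt i j (x * z), Xt k l y⁆ :=
    L4 i j k l hij hik hil hjk hjl hkl
  have hF3 : ∀ x y z : R, ⁅Xt i j x, Xt k l (y * z)⁆ = ⁅Xt i l z, Xt k j (y * x)⁆ :=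
    L3 i j k l hij hik hil hjk hjl hkl
  -- g = -f
  have gf : ∀ x y : R, ⁅Xt i l x, Xt k j y⁆ = -⁅Xt i j x, Xt k l y⁆ := by
    intro x y
    have h := hG4 x y 1
    rwa [mul_one, mul_one] at h
  -- antisymmetry of f in its ring arguments
  have fanti : ∀ x y : R, ⁅Xt i j x, Xt k l y⁆ = -⁅Xt i j y, Xt k l x⁆ := by
    intro x y
    have h := hF3 x 1 y
    rw [one_mul, one_mul] at h
    rw [h, gf]
  -- shifting a factor: f (y*z) x = f y (x*z)
  have fA : ∀ x y z : R, ⁅Xt i j (y * z), Xt k l x⁆ = ⁅Xt i j y, Xt k l (x * z)⁆ := by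
    intro x y z
    rw [hF1 x y z, gf, neg_neg]
  have fmul1 : ∀ x y : R, ⁅Xt i j x, Xt k l y⁆ = ⁅Xt i j (x * y), Xt k l 1⁆ := by
    intro x y
    have h := fA 1 x y
    rw [one_mul] at h
    exact h.symm
  -- f is 2-torsion
  have negf : ∀ x y : R, ⁅Xt i j x, Xt k l y⁆ = -⁅Xt i j x, Xt k l y⁆ := by
    intro x y
    have h1 : ⁅Xt i j (x * y), Xt k l 1⁆ = ⁅Xt i j 1, Xt k l (x * y)⁆ := by
      have h := fA 1 1 (x * y)
      rwa [one_mul] at h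
    have h2 : ⁅Xt i j (x * y), Xt k l 1⁆ = -⁅Xt i j 1, Xt k l (x * y)⁆ := fanti _ _
    rw [fmul1 x y]
    conv_lhs => rw [h2, ← h1]
  constructor
  · -- g (b*c) a = f (b*a) c
    rw [hG1 a b c, fmul1 b (a * c), ← mul_assoc, ← fmul1 (b * a) c, ← negf (b * a) c]
  · -- f a b = f (b*a) 1
    rw [fanti a b, fmul1 b a, ← negf (b * a) 1]
end

section
/- In the setting of a central extension τ: L → st₄(R) with normalized preimages, for pairwise distinct i,j,k,l and a,b,c,d ∈ R one has ν^{ij}_{kl}(abc + cba, d) = 0; in particular ν^{ij}_{kl}(a,b) = ν^{ij}_{kl}(b,a) and ν^{ij}_{kl}(d(ab-ba), 1) = 0, so ν^{ij}_{kl}(·,1) vanishes on the ideal I₂ = 2R + R[R,R]. -/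
/-- In the setting of a central extension `τ : L → st₄(R)` with normalized preimages
`X̃_{ij}(a)`, for pairwise distinct `i,j,k,l` and `a,b,c,d ∈ R` one has
`ν^{ij}_{kl}(abc + cba, d) = 0`; in particular `ν^{ij}_{kl}(a,b) = ν^{ij}_{kl}(b,a)` and
`ν^{ij}_{kl}(d(ab-ba), 1) = 0`, so `ν^{ij}_{kl}(·, 1)` vanishes on the ideal
`I₂ = 2R + R[R,R]`. Here `ν^{ij}_{kl}(a,b) = ⁅X̃_{ij}(a), X̃_{kl}(b)⁆`. -/
theorem steinberg_st4_nu_vanishing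
    (K R St L : Type) [CommRing K] [Ring R] [Algebra K R]
    [LieRing St] [LieAlgebra K St] [LieRing L] [LieAlgebra K L]
    (X : Fin 4 → Fin 4 → R →ₗ[K] St) (hst : IsSteinberg K R 4 St X)
    (τ : L →ₗ⁅K⁆ St) (hsurj : Function.Surjective τ)
    (hcent : ∀ z : L, τ z = 0 → ∀ w : L, ⁅z, w⁆ = 0)
    (Xt : Fin 4 → Fin 4 → R →ₗ[K] L)
    (hpre : ∀ i j : Fin 4, i ≠ j → ∀ a : R, τ (Xt i j a) = X i j a)
    (hnorm : ∀ i j k : Fin 4, i ≠ j → j ≠ k → i ≠ k → ∀ a b : R,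
      ⁅Xt i k a, Xt k j b⁆ = Xt i j (a * b))
    (i j k l : Fin 4) (hij : i ≠ j) (hik : i ≠ k) (hil : i ≠ l)
    (hjk : j ≠ k) (hjl : j ≠ l) (hkl : k ≠ l) :
    (∀ a b c d : R, ⁅Xt i j (a * b * c + c * b * a), Xt k l d⁆ = 0) ∧
    (∀ a b : R, ⁅Xt i j a, Xt k l b⁆ = ⁅Xt i j b, Xt k l a⁆) ∧
    (∀ a b d : R, ⁅Xt i j (d * (a * b - b * a)), Xt k l 1⁆ = 0) ∧
    (∀ x ∈ (Submodule.span K {x : R | ∃ a : R, x = 2 * a} ⊔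
        Submodule.span K {x : R | ∃ c a b : R, x = c * (a * b - b * a)} : Submodule K R),
      ⁅Xt i j x, Xt k l 1⁆ = 0) := by

  have hc : ∀ p q r s : Fin 4, p ≠ q → r ≠ s → q ≠ r → p ≠ s → ∀ a b : R, ∀ w : L,
      ⁅(⁅Xt p q a, Xt r s b⁆ : L), w⁆ = 0 := by
    intro p q r s hpq hrs hqr hps a b w
    refine hcent _ ?_ w
    rw [LieHom.map_lie, hpre p q hpq a, hpre r s hrs b]
    exact hst.bracket_zero hpq hrs hqr hps a b
  have haveC : ∀ p q r s : Fin 4, p ≠ q → p ≠ r → p ≠ s → q ≠ r → q ≠ s → r ≠ s →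
      ∀ a b d : R, ⁅Xt p q a, Xt r s (b*d)⁆ = ⁅Xt r q b, Xt p s (a*d)⁆ := by
    intro p q r s hpq hpr hps hqr hqs hrs a b d
    rw [← hnorm r s q hrs hqs.symm hqr.symm b d, leibniz_lie,
        hc p q r q hpq hqr.symm hqr hpq a b, hnorm p s q hps hqs.symm hpq a d, zero_add]
  have haveD : ∀ p q r s : Fin 4, p ≠ q → p ≠ r → p ≠ s → q ≠ r → q ≠ s → r ≠ s →
      ∀ a b d : R, ⁅Xt p q a, Xt r s (b*d)⁆ = -⁅Xt r q (b*a), Xt p s d⁆ := by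
    intro p q r s hpq hpr hps hqr hqs hrs a b d
    rw [← hnorm r s p hrs hps.symm hpr.symm b d, leibniz_lie,
        ← lie_skew (Xt p q a) (Xt r p b), hnorm r q p hqr.symm hpq.symm hpr.symm b a,
        ← lie_skew (Xt r p b) (⁅Xt p q a, Xt p s d⁆),
        hc p q p s hpq hps hpq.symm hps a d, neg_lie, neg_zero, add_zero]
  have haveA : ∀ p q r s : Fin 4, p ≠ q → p ≠ r → p ≠ s → q ≠ r → q ≠ s → r ≠ s →
      ∀ a b d : R, ⁅Xt p q (a*b), Xt r s d⁆ = -⁅Xt r q b, Xt p s (a*d)⁆ := by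
    intro p q r s hpq hpr hps hqr hqs hrs a b d
    rw [← hnorm p q r hpq hqr hpr a b, lie_lie,
        ← lie_skew (Xt p r a) (⁅Xt r q b, Xt r s d⁆),
        hc r q r s hqr.symm hrs hqr hrs b d, neg_zero,
        hnorm p s r hps hrs.symm hpr a d, zero_sub]
  have hswap : ∀ a d : R, ⁅Xt k j a, Xt i l d⁆ = -⁅Xt i j a, Xt k l d⁆ := by
    intro a d
    have h := haveD k j i l hjk.symm hik.symm hkl hij.symm hjl hil a 1 d
    rwa [one_mul, one_mul] at h
  have hP1 : ∀ x y z : R, ⁅Xt i j (x*y), Xt k l z⁆ = ⁅Xt i j y, Xt k l (x*z)⁆ := by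
    intro x y z
    rw [haveA i j k l hij hik hil hjk hjl hkl x y z, hswap y (x*z), neg_neg]
  have hpre3 : ∀ x y z : R, ⁅Xt i j (x*y), Xt k l z⁆ = -⁅Xt i j x, Xt k l (y*z)⁆ := by
    intro x y z
    rw [haveA i j k l hij hik hil hjk hjl hkl x y z,
        ← haveC i j k l hij hik hil hjk hjl hkl x y z]
  have htwo : ∀ x z : R, ⁅Xt i j x, Xt k l z⁆ + ⁅Xt i j x, Xt k l z⁆ = 0 := by
    intro x z
    have h := hpre3 x 1 z
    rw [mul_one, one_mul] at h
    exact add_eq_zero_iff_eq_neg.mpr h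
  have hneg : ∀ x z : R, -⁅Xt i j x, Xt k l z⁆ = ⁅Xt i j x, Xt k l z⁆ := fun x z =>
    neg_eq_of_add_eq_zero_left (htwo x z)
  have hP3 : ∀ x y z : R, ⁅Xt i j (x*y), Xt k l z⁆ = ⁅Xt i j x, Xt k l (y*z)⁆ := by
    intro x y z
    rw [hpre3 x y z, hneg]
  have hsym : ∀ a b : R, ⁅Xt i j a, Xt k l b⁆ = ⁅Xt i j b, Xt k l a⁆ := by
    intro a b
    have h1 := hP3 a b 1
    have h2 := hP1 a b 1
    rw [mul_one] at h1 h2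
    rw [← h1, h2]
  have hQ : ∀ x y z : R, ⁅Xt i j x, Xt k l (y*z)⁆ = ⁅Xt i j x, Xt k l (z*y)⁆ := by
    intro x y z
    rw [hsym x (y*z), hP1 y z x, ← hP3 z y x, hsym (z*y) x]
  have hc3 : ∀ a b d : R, ⁅Xt i j (d * (a * b - b * a)), Xt k l 1⁆ = 0 := by
    intro a b d
    rw [mul_sub, map_sub, sub_lie, hP3 d (a*b) 1, hP3 d (b*a) 1, mul_one, mul_one,
        hQ d a b, sub_self]
  refine ⟨?_, hsym, hc3, ?_⟩
  · intro a b c d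
    have key : ⁅Xt i j (a*b*c), Xt k l d⁆ = ⁅Xt i j (c*b*a), Xt k l d⁆ := by
      rw [hP3 (a*b) c d, hP1 a b (c*d), hQ b a (c*d), mul_assoc c d a, ← hP3 b c (d*a),
          hQ (b*c) d a, hP3 b c (a*d), ← hP1 c b (a*d), ← hP3 (c*b) a d]
    rw [map_add, add_lie, key]
    exact htwo _ _
  · intro x hx
    rw [← Submodule.span_union] at hx
    induction hx using Submodule.span_induction with
    | mem y hy =>
      rcases hy with ⟨a, rfl⟩ | ⟨c, a, b, rfl⟩
      · rw [two_mul, map_add, add_lie]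
        exact htwo a 1
      · exact hc3 a b c
    | zero => rw [map_zero, zero_lie]
    | add y z _ _ hy hz => rw [map_add, add_lie, hy, hz, add_zero]
    | smul c y _ hy => rw [map_smul, smul_lie, hy, smul_zero]
end

section
/- Let τ: L → st₃(R) be a central extension with central kernel V and X̃_{ij}(a) normalized preimages satisfying [X̃_{ik}(a), X̃_{kj}(b)] = X̃_{ij}(ab). Then for distinct i,j,k ∈ {1,2,3}, the element ν^i_{jk}(a,b) := [X̃_{ij}(a), X̃_{ik}(b)] ∈ V satisfies ν^i_{jk}(a,b) = ν^i_{jk}(1, ab), 3ν^i_{jk}(1,a) = 0, and ν^i_{jk}(1, (ab-ba)c) = 0; hence ν^i_{jk}(1, ·) vanishes on the ideal I₃ = 3R + R[R,R]. -/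
/-- Let `τ : L → st₃(R)` be a central extension with normalized preimages `X̃_{ij}(a)`
satisfying `⁅X̃_{ik}(a), X̃_{kj}(b)⁆ = X̃_{ij}(ab)`. Then for distinct `i,j,k ∈ {1,2,3}`,
the central element `ν^i_{jk}(a,b) = ⁅X̃_{ij}(a), X̃_{ik}(b)⁆` satisfies
`ν^i_{jk}(a,b) = ν^i_{jk}(1, ab)`, `3 ν^i_{jk}(1,a) = 0`, `ν^i_{jk}(1, (ab-ba)c) = 0`;
hence `ν^i_{jk}(1, ·)` vanishes on the ideal `I₃ = 3R + R[R,R]`. -/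
theorem steinberg_st3_nu_vanishing
    (K R St L : Type) [CommRing K] [Ring R] [Algebra K R]
    [LieRing St] [LieAlgebra K St] [LieRing L] [LieAlgebra K L]
    (X : Fin 3 → Fin 3 → R →ₗ[K] St) (hst : IsSteinberg K R 3 St X)
    (τ : L →ₗ⁅K⁆ St) (hsurj : Function.Surjective τ)
    (hcent : ∀ z : L, τ z = 0 → ∀ w : L, ⁅z, w⁆ = 0)
    (Xt : Fin 3 → Fin 3 → R →ₗ[K] L)
    (hpre : ∀ i j : Fin 3, i ≠ j → ∀ a : R, τ (Xt i j a) = X i j a)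
    (hnorm : ∀ i j k : Fin 3, i ≠ j → j ≠ k → i ≠ k → ∀ a b : R,
      ⁅Xt i k a, Xt k j b⁆ = Xt i j (a * b))
    (i j k : Fin 3) (hij : i ≠ j) (hjk : j ≠ k) (hik : i ≠ k) :
    (∀ a b : R, ⁅Xt i j a, Xt i k b⁆ = ⁅Xt i j 1, Xt i k (a * b)⁆) ∧
    (∀ a : R, (3 : ℤ) • ⁅Xt i j 1, Xt i k a⁆ = 0) ∧
    (∀ a b c : R, ⁅Xt i j 1, Xt i k ((a * b - b * a) * c)⁆ = 0) ∧
    (∀ x ∈ (Submodule.span K {x : R | ∃ a : R, x = 3 * a} ⊔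
        Submodule.span K {x : R | ∃ c a b : R, x = c * (a * b - b * a)} : Submodule K R),
      ⁅Xt i j 1, Xt i k x⁆ = 0) := by
  have hji := hij.symm
  have hkj := hjk.symm
  have hki := hik.symm
  -- the normalization relation in a convenient orientation
  have hN : ∀ p q r : Fin 3, p ≠ q → q ≠ r → p ≠ r → ∀ a b : R,
      ⁅Xt p q a, Xt q r b⁆ = Xt p r (a * b) :=
    fun p q r hpq hqr hpr a b => hnorm p r q hpr hqr.symm hpq a b
  -- central elements kill brackets on both sides
  have hwz : ∀ z : L, τ z = 0 → ∀ w : L, ⁅w, z⁆ = 0 := by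
    intro z hz w
    rw [← lie_skew, hcent z hz w, neg_zero]
  -- brackets sharing a first index are central
  have tν : ∀ p q r : Fin 3, p ≠ q → p ≠ r → q ≠ r → ∀ a b : R,
      τ ⁅Xt p q a, Xt p r b⁆ = 0 := by
    intro p q r hpq hpr hqr a b
    rw [LieHom.map_lie, hpre p q hpq, hpre p r hpr]
    exact hst.bracket_zero hpq hpr hpq.symm hpr a b
  -- brackets sharing a second index are central
  have tσ : ∀ p q r : Fin 3, p ≠ r → q ≠ r → p ≠ q → ∀ a b : R,
      τ ⁅Xt p r a, Xt q r b⁆ = 0 := by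
    intro p q r hpr hqr hpq a b
    rw [LieHom.map_lie, hpre p r hpr, hpre q r hqr]
    exact hst.bracket_zero hpr hqr hqr.symm hpr a b
  -- brackets with equal index pairs vanish
  have hrho : ∀ p q r : Fin 3, p ≠ q → q ≠ r → p ≠ r → ∀ a b : R,
      ⁅Xt p q a, Xt p q b⁆ = 0 := by
    intro p q r hpq hqr hpr a b
    have h1 : Xt p q a = ⁅Xt p r a, Xt r q 1⁆ := by
      rw [hN p r q hpr hqr.symm hpq, mul_one]
    rw [h1, lie_lie, hwz _ (tσ r p q hqr.symm hpq hpr.symm 1 b) _,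
      hwz _ (tν p r q hpr hpq hqr.symm a b) _, sub_zero]
  -- ν(a,b) = ν(1,ab)
  have key1 : ∀ a b : R, ⁅Xt i j a, Xt i k b⁆ = ⁅Xt i j 1, Xt i k (a * b)⁆ := by
    intro a b
    have h1 : Xt i k b = ⁅Xt i j 1, Xt j k b⁆ := by
      rw [hN i j k hij hjk hik, one_mul]
    conv_lhs => rw [h1]
    rw [leibniz_lie, hrho i j k hij hjk hik a 1, zero_lie, zero_add,
      hN i j k hij hjk hik a b]
  -- ν(ab, c) = ν(cb, a)
  have key2 : ∀ a b c : R, ⁅Xt i j (a * b), Xt i k c⁆ = ⁅Xt i j (c * b), Xt i k a⁆ := by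
    intro a b c
    have h1 : Xt i j (a * b) = ⁅Xt i k a, Xt k j b⁆ := (hN i k j hik hkj hij a b).symm
    rw [h1, lie_lie, hrho i k j hik hkj hij a c, lie_zero, sub_zero]
    have h2 : ⁅Xt k j b, Xt i k c⁆ = -Xt i j (c * b) := by
      rw [← lie_skew, hN i k j hik hkj hij c b]
    rw [h2, lie_neg]
    exact lie_skew _ _
  -- ν(1, uv) = ν(1, vu)
  have swap : ∀ u v : R, ⁅Xt i j 1, Xt i k (u * v)⁆ = ⁅Xt i j 1, Xt i k (v * u)⁆ := by
    intro u v
    rw [← key1 u v, ← key1 v u]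
    calc ⁅Xt i j u, Xt i k v⁆ = ⁅Xt i j (u * 1), Xt i k v⁆ := by rw [mul_one]
      _ = ⁅Xt i j (v * 1), Xt i k u⁆ := key2 u 1 v
      _ = ⁅Xt i j v, Xt i k u⁆ := by rw [mul_one]
  -- ν(1, abc) = ν(1, bac)
  have perm : ∀ a b c : R,
      ⁅Xt i j 1, Xt i k (a * b * c)⁆ = ⁅Xt i j 1, Xt i k (b * a * c)⁆ := by
    intro a b c
    symm
    calc ⁅Xt i j 1, Xt i k (b * a * c)⁆
        = ⁅Xt i j (b * a), Xt i k c⁆ := (key1 (b * a) c).symm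
      _ = ⁅Xt i j (c * a), Xt i k b⁆ := key2 b a c
      _ = ⁅Xt i j 1, Xt i k (c * a * b)⁆ := key1 (c * a) b
      _ = ⁅Xt i j 1, Xt i k (b * (c * a))⁆ := swap (c * a) b
      _ = ⁅Xt i j 1, Xt i k (b * c * a)⁆ := by rw [mul_assoc]
      _ = ⁅Xt i j 1, Xt i k (a * (b * c))⁆ := swap (b * c) a
      _ = ⁅Xt i j 1, Xt i k (a * b * c)⁆ := by rw [mul_assoc]
  -- the element H = [X̃_ij(1), X̃_ji(1)] acts as expected
  have hH1 : ∀ c : R, ⁅⁅Xt i j 1, Xt j i 1⁆, Xt i k c⁆ = Xt i k c := by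
    intro c
    rw [lie_lie, hwz _ (tν i j k hij hik hjk 1 c) _, sub_zero,
      hN j i k hji hik hjk 1 c, hN i j k hij hjk hik 1 (1 * c), one_mul, one_mul]
  have hH2 : ⁅⁅Xt i j 1, Xt j i 1⁆, Xt k j 1⁆ = Xt k j 1 := by
    rw [lie_lie, hwz _ (tσ i k j hij hkj hik 1 1) _, sub_zero]
    have h1 : ⁅Xt j i 1, Xt k j 1⁆ = -Xt k i 1 := by
      rw [← lie_skew, hN k j i hkj hji hki 1 1, mul_one]
    have h2 : ⁅Xt i j 1, Xt k i 1⁆ = -Xt k j 1 := by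
      rw [← lie_skew, hN k i j hki hij hkj 1 1, mul_one]
    rw [h1, lie_neg, h2, neg_neg]
  have hH3 : ∀ d : R, ⁅⁅Xt i j 1, Xt j i 1⁆, Xt i j d⁆ = Xt i j d + Xt i j d := by
    intro d
    have hd : Xt i j d = ⁅Xt i k d, Xt k j 1⁆ := by
      rw [hN i k j hik hkj hij, mul_one]
    conv_lhs => rw [hd]
    rw [leibniz_lie, hH1 d, hH2, ← hd]
  -- 3 ν(1,a) = 0
  have key3z : ∀ a : R, ⁅Xt i j 1, Xt i k a⁆ + ⁅Xt i j 1, Xt i k a⁆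
      + ⁅Xt i j 1, Xt i k a⁆ = 0 := by
    intro a
    have key : ⁅⁅Xt i j 1, Xt j i 1⁆, ⁅Xt i k a, Xt i j 1⁆⁆ = 0 :=
      hwz _ (tν i k j hik hij hkj a 1) _
    rw [leibniz_lie, hH1 a, hH3 1, lie_add] at key
    have hsk : ⁅Xt i j 1, Xt i k a⁆ = -⁅Xt i k a, Xt i j 1⁆ := (lie_skew _ _).symm
    rw [hsk, ← neg_add, ← neg_add, neg_eq_zero, add_assoc]
    exact key
  have key3 : ∀ a b c : R, ⁅Xt i j 1, Xt i k ((a * b - b * a) * c)⁆ = 0 := by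
    intro a b c
    rw [sub_mul, map_sub, lie_sub, perm a b c, sub_self]
  refine ⟨key1, ?_, key3, ?_⟩
  · intro a
    have h3 : (3 : ℤ) • ⁅Xt i j 1, Xt i k a⁆
        = ⁅Xt i j 1, Xt i k a⁆ + ⁅Xt i j 1, Xt i k a⁆ + ⁅Xt i j 1, Xt i k a⁆ := by
      rw [show (3 : ℤ) = 1 + 1 + 1 by norm_num, add_smul, add_smul, one_smul]
    rw [h3]
    exact key3z a
  · intro x hx
    let S : Submodule K R :=
      { carrier := {x : R | ⁅Xt i j 1, Xt i k x⁆ = 0}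
        add_mem' := fun {a b} ha hb => by
          simp only [Set.mem_setOf_eq] at ha hb ⊢
          rw [map_add, lie_add, ha, hb, add_zero]
        zero_mem' := by simp only [Set.mem_setOf_eq, map_zero, lie_zero]
        smul_mem' := fun c a ha => by
          simp only [Set.mem_setOf_eq] at ha ⊢
          rw [map_smul, lie_smul, ha, smul_zero] }
    have hle : Submodule.span K {x : R | ∃ a : R, x = 3 * a} ⊔
        Submodule.span K {x : R | ∃ c a b : R, x = c * (a * b - b * a)} ≤ S := by
      refine sup_le (Submodule.span_le.2 ?_) (Submodule.span_le.2 ?_)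
      · rintro x ⟨a, rfl⟩
        show ⁅Xt i j 1, Xt i k (3 * a)⁆ = 0
        have h3 : (3 : R) * a = a + a + a := by
          rw [show (3 : R) = 1 + 1 + 1 by norm_num, add_mul, add_mul, one_mul]
        rw [h3, map_add, map_add, lie_add, lie_add]
        exact key3z a
      · rintro x ⟨c, a, b, rfl⟩
        show ⁅Xt i j 1, Xt i k (c * (a * b - b * a))⁆ = 0
        have heq : ⁅Xt i j 1, Xt i k (c * (a * b))⁆
            = ⁅Xt i j 1, Xt i k (c * (b * a))⁆ := by
          calc ⁅Xt i j 1, Xt i k (c * (a * b))⁆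
              = ⁅Xt i j 1, Xt i k (c * a * b)⁆ := by rw [mul_assoc]
            _ = ⁅Xt i j 1, Xt i k (b * (c * a))⁆ := swap (c * a) b
            _ = ⁅Xt i j 1, Xt i k (b * c * a)⁆ := by rw [mul_assoc]
            _ = ⁅Xt i j 1, Xt i k (c * b * a)⁆ := perm b c a
            _ = ⁅Xt i j 1, Xt i k (c * (b * a))⁆ := by rw [mul_assoc]
        rw [mul_sub, map_sub, lie_sub, heq, sub_self]
    exact hle hx
end
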